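/- arXiv:1201.4823 — 7 statements merged into one kernel-verified Lean document; each statement's English description precedes it below -/
import Mathlib

section
/- With the setup of the ψ_ω automorphisms on the free product F of copies of ℤ/2 indexed by a finite poset Ω: if ω₁ < ω₂ in Ω, then ψ_{ω₁} and ψ_{ω₂} commute as automorphisms of F. -/
open scoped Classical

/-- The set of relations `x_ω² = 1` defining the free product of copies of `ℤ/2`
indexed by `Ω`. -/
def sqRels (Ω : Type) : Set (FreeGroup Ω) := Set.range (fun ω : Ω => FreeGroup.of ω ^ 2)

/-- `FP Ω` is the free product of copies of `ℤ/2` indexed by `Ω`. -/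
abbrev FP (Ω : Type) := PresentedGroup (sqRels Ω)

/-- The generator `x_ω` of `FP Ω`. -/
def xg {Ω : Type} (ω : Ω) : FP Ω := PresentedGroup.of ω

/-- The endomorphism `ψ_ω` is determined by `ψ_ω(x_γ) = x_ω x_γ x_ω` if `γ < ω`
and `ψ_ω(x_γ) = x_γ` otherwise. -/
def IsPsiHom {Ω : Type} [PartialOrder Ω] (ω : Ω) (ψ : FP Ω →* FP Ω) : Prop :=
  ∀ γ : Ω, ψ (xg γ) = if γ < ω then xg ω * xg γ * xg ω else xg γ

/-!
For `γ < ω₁ < ω₂`, the automorphism `ψ_{ω₂}` acts on both `x_{ω₁}` and `x_γ` as conjugation by the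
involution `x_{ω₂}`, so it sends `x_{ω₁} x_γ x_{ω₁}` to `x_{ω₂} x_{ω₁} x_γ x_{ω₁} x_{ω₂}`, which is
also `ψ_{ω₁} ψ_{ω₂} (x_γ)`. For `γ` not below `ω₁` only `ψ_{ω₂}` moves `x_γ`, and `ψ_{ω₁}` fixes `x_{ω₂}`.
-/

theorem mul_mul_mul_of_mul_self_eq_one {G : Type*} [Group G] {t : G} (ht : t * t = 1)
    (a b c : G) : (t * a * t) * (t * b * t) * (t * c * t) = t * (a * b * c) * t := by
  simp only [mul_assoc, ← mul_assoc t t, ht, one_mul]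

theorem xg_mul_self {Ω : Type} (ω : Ω) : xg ω * xg ω = 1 := by
  rw [← sq]
  exact PresentedGroup.one_of_mem ⟨ω, rfl⟩

namespace IsPsiHom

variable {Ω : Type} [PartialOrder Ω] {ω γ : Ω} {ψ : FP Ω →* FP Ω}

theorem apply_of_lt (hψ : IsPsiHom ω ψ) (hγ : γ < ω) : ψ (xg γ) = xg ω * xg γ * xg ω := by
  rw [hψ γ, if_pos hγ]

theorem apply_of_not_lt (hψ : IsPsiHom ω ψ) (hγ : ¬γ < ω) : ψ (xg γ) = xg γ := by
  rw [hψ γ, if_neg hγ]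

end IsPsiHom

theorem psi_commute_general (Ω : Type) [PartialOrder Ω] (ω₁ ω₂ : Ω) (h : ω₁ < ω₂)
    (ψ₁ ψ₂ : FP Ω →* FP Ω) (h₁ : IsPsiHom ω₁ ψ₁) (h₂ : IsPsiHom ω₂ ψ₂) :
    ψ₁.comp ψ₂ = ψ₂.comp ψ₁ := by
  refine PresentedGroup.ext fun γ => ?_
  change ψ₁ (ψ₂ (xg γ)) = ψ₂ (ψ₁ (xg γ))
  have h₂₁ : ¬ω₂ < ω₁ := h.asymm
  by_cases hγ₁ : γ < ω₁
  · have hγ₂ : γ < ω₂ := hγ₁.trans h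
    rw [h₂.apply_of_lt hγ₂, h₁.apply_of_lt hγ₁, map_mul, map_mul, map_mul, map_mul,
      h₁.apply_of_not_lt h₂₁, h₁.apply_of_lt hγ₁, h₂.apply_of_lt h, h₂.apply_of_lt hγ₂,
      mul_mul_mul_of_mul_self_eq_one (xg_mul_self ω₂)]
  by_cases hγ₂ : γ < ω₂
  · rw [h₂.apply_of_lt hγ₂, h₁.apply_of_not_lt hγ₁, map_mul, map_mul,
      h₁.apply_of_not_lt h₂₁, h₁.apply_of_not_lt hγ₁, h₂.apply_of_lt hγ₂]
  · rw [h₂.apply_of_not_lt hγ₂, h₁.apply_of_not_lt hγ₁, h₂.apply_of_not_lt hγ₂]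

/-- If `ω₁ < ω₂` then the endomorphisms `ψ_{ω₁}` and `ψ_{ω₂}` commute. -/
theorem psi_commute (Ω : Type) [PartialOrder Ω] [Fintype Ω] (ω₁ ω₂ : Ω) (h : ω₁ < ω₂)
    (ψ₁ ψ₂ : FP Ω →* FP Ω) (h₁ : IsPsiHom ω₁ ψ₁) (h₂ : IsPsiHom ω₂ ψ₂) :
    ψ₁.comp ψ₂ = ψ₂.comp ψ₁ :=
  psi_commute_general Ω ω₁ ω₂ h ψ₁ ψ₂ h₁ h₂
end

section
/- The subgroup W of F ⋊ Ψ generated by the elements s_ω = x_ω ψ_ω, together with the set S = {s_ω : ω ∈ Ω}, forms a right-angled Coxeter system: all relations among the s_ω are consequences of s_ω² = 1 and s_{ω₁}s_{ω₂} = s_{ω₂}s_{ω₁} for comparable ω₁, ω₂. Equivalently, the natural homomorphism from the abstract right-angled Coxeter group on generators r_ω (with relations r_ω² = 1 and r_{ω₁}r_{ω₂} = r_{ω₂}r_{ω₁} whenever ω₁ < ω₂) to F ⋊ Ψ sending r_ω to s_ω is injective. -/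
open scoped Classical

/-- The automorphism `ψ_ω` is determined by `ψ_ω(x_γ) = x_ω x_γ x_ω` if `γ < ω`
and `ψ_ω(x_γ) = x_γ` otherwise. -/
def IsPsiAut {Ω : Type} [PartialOrder Ω] (ω : Ω) (ψ : MulAut (FP Ω)) : Prop :=
  ∀ γ : Ω, ψ (xg γ) = if γ < ω then xg ω * xg γ * xg ω else xg γ

/-- The semidirect product `F ⋊ Aut(F)` for the tautological action. -/
abbrev GP (Ω : Type) : Type :=
  SemidirectProduct (FP Ω) (MulAut (FP Ω)) (MonoidHom.id (MulAut (FP Ω)))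

/-- The element `s_ω = x_ω · ψ_ω` of the semidirect product. -/
def sElt {Ω : Type} (ω : Ω) (ψ : MulAut (FP Ω)) : GP Ω := ⟨xg ω, ψ⟩

/-- The relations of the abstract right-angled Coxeter group on generators `r_ω`,
`ω ∈ Ω`: `r_ω² = 1`, and `r_{ω₁}` and `r_{ω₂}` commute whenever `ω₁ < ω₂`. -/
def racgRels (Ω : Type) [PartialOrder Ω] : Set (FreeGroup Ω) :=
  Set.range (fun ω : Ω => FreeGroup.of ω ^ 2) ∪
    {w | ∃ ω₁ ω₂ : Ω, ω₁ < ω₂ ∧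
      w = FreeGroup.of ω₁ * FreeGroup.of ω₂ * (FreeGroup.of ω₁)⁻¹ * (FreeGroup.of ω₂)⁻¹}

/-- The abstract right-angled Coxeter group associated with the poset `Ω`. -/
abbrev RACG (Ω : Type) [PartialOrder Ω] := PresentedGroup (racgRels Ω)

/-!
Collapsing every `x_ω` of `F` to the generator `r_ω` gives a homomorphism `p : F → W` onto the
abstract Coxeter group, and each `ψ_ω` preserves `p` because `r_ω r_γ r_ω = r_γ` for `γ < ω`.
On the elements of `F ⋊ Ψ` whose automorphism part preserves `p`, the map `(f, ψ) ↦ p f` is a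
homomorphism; composed with `r_ω ↦ s_ω` it fixes every generator, so it is a left inverse.
-/

namespace SemidirectProduct

variable {N G H : Type*} [Group N] [Group G] [Group H]

def homStabilizer (φ : G →* MulAut N) (p : N →* H) : Subgroup G where
  carrier := {g | ∀ n, p (φ g n) = p n}
  one_mem' := by simp
  mul_mem' {a b} ha hb n := by rw [map_mul, MulAut.mul_apply, ha, hb]
  inv_mem' {a} ha n := by rw [← ha, map_inv, MulAut.apply_inv_self]

variable {φ : G →* MulAut N}

def leftRetraction (p : N →* H) : (homStabilizer φ p).comap (rightHom (φ := φ)) →* H where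
  toFun g := p g.1.left
  map_one' := by simp
  map_mul' g h := by
    rw [Subgroup.coe_mul, mul_left, map_mul]
    exact congrArg (p g.1.left * ·) (g.2 _)

theorem injective_of_generators {A : Type*} [Group A] (ρ : A →* N ⋊[φ] G) (p : N →* A)
    {s : Set A} (hs : Subgroup.closure s = ⊤)
    (hstab : ∀ a ∈ s, (ρ a).right ∈ homStabilizer φ p) (hleft : ∀ a ∈ s, p (ρ a).left = a) :
    Function.Injective ρ := by
  have hρ : ∀ a, ρ a ∈ (homStabilizer φ p).comap (rightHom (φ := φ)) := by
    have : Subgroup.closure s ≤ ((homStabilizer φ p).comap (rightHom (φ := φ))).comap ρ :=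
      (Subgroup.closure_le _).mpr hstab
    exact fun a => this (hs ▸ Subgroup.mem_top a)
  have hretract : (leftRetraction p).comp (ρ.codRestrict _ hρ) = MonoidHom.id A :=
    MonoidHom.eq_of_eqOn_dense hs hleft
  exact Function.LeftInverse.injective (g := fun x => p x.left)
    fun a => DFunLike.congr_fun hretract a

end SemidirectProduct

section RACG

variable {Ω : Type} [PartialOrder Ω]

lemma racg_of_sq (ω : Ω) : (PresentedGroup.of ω : RACG Ω) ^ 2 = 1 :=
  PresentedGroup.one_of_mem (Or.inl ⟨ω, rfl⟩)

lemma racg_of_commute {ω₁ ω₂ : Ω} (h : ω₁ < ω₂) :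
    Commute (PresentedGroup.of ω₁ : RACG Ω) (PresentedGroup.of ω₂) := by
  have hrel := PresentedGroup.one_of_mem (rels := racgRels Ω) (Or.inr ⟨ω₁, ω₂, h, rfl⟩)
  simp only [map_mul, map_inv] at hrel
  exact commutatorElement_eq_one_iff_mul_comm.mp hrel

lemma racg_of_conj {γ ω : Ω} (h : γ < ω) :
    (PresentedGroup.of ω : RACG Ω) * PresentedGroup.of γ * PresentedGroup.of ω =
      PresentedGroup.of γ := by
  rw [← (racg_of_commute h).eq, mul_assoc, ← sq, racg_of_sq, mul_one]

variable (Ω) in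
def fpToRACG : FP Ω →* RACG Ω :=
  PresentedGroup.toGroup (f := PresentedGroup.of) (by rintro r ⟨ω, rfl⟩; simp [racg_of_sq])

@[simp] lemma fpToRACG_xg (ω : Ω) : fpToRACG Ω (xg ω) = PresentedGroup.of ω :=
  PresentedGroup.toGroup.of _

lemma IsPsiAut.mem_homStabilizer {ω : Ω} {ψ : MulAut (FP Ω)} (hψ : IsPsiAut ω ψ) :
    ψ ∈ SemidirectProduct.homStabilizer (MonoidHom.id _) (fpToRACG Ω) := by
  suffices (fpToRACG Ω).comp ψ.toMonoidHom = fpToRACG Ω from DFunLike.congr_fun this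
  refine PresentedGroup.ext fun γ => ?_
  change fpToRACG Ω (ψ (xg γ)) = fpToRACG Ω (xg γ)
  by_cases hγ : γ < ω
  · simp [hψ γ, hγ, racg_of_conj hγ]
  · simp [hψ γ, hγ]

end RACG

theorem racg_to_W_injective_general (Ω : Type) [PartialOrder Ω]
    (ψA : Ω → MulAut (FP Ω)) (hψ : ∀ ω, IsPsiAut ω (ψA ω))
    (φ : RACG Ω →* GP Ω) (hφ : ∀ ω : Ω, φ (PresentedGroup.of ω) = sElt ω (ψA ω)) :
    Function.Injective φ := by
  refine SemidirectProduct.injective_of_generators φ (fpToRACG Ω)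
    (PresentedGroup.closure_range_of _) ?_ ?_
  · rintro _ ⟨ω, rfl⟩
    simpa [hφ, sElt] using (hψ ω).mem_homStabilizer
  · rintro _ ⟨ω, rfl⟩
    simp [hφ, sElt]

/-- `(W, S)` is a right-angled Coxeter system: the natural homomorphism from the abstract
right-angled Coxeter group (generators `r_ω` with relations `r_ω² = 1` and commutation of
`r_{ω₁}, r_{ω₂}` for comparable `ω₁, ω₂`) to `F ⋊ Ψ` sending `r_ω ↦ s_ω = x_ω ψ_ω`
is injective. -/
theorem racg_to_W_injective (Ω : Type) [PartialOrder Ω] [Fintype Ω]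
    (ψA : Ω → MulAut (FP Ω)) (hψ : ∀ ω, IsPsiAut ω (ψA ω))
    (φ : RACG Ω →* GP Ω) (hφ : ∀ ω : Ω, φ (PresentedGroup.of ω) = sElt ω (ψA ω)) :
    Function.Injective φ :=
  racg_to_W_injective_general Ω ψA hψ φ hφ
end

section
/- Let F_{>ω} ⊆ F be the subgroup generated by all x_{ω'} with ω' > ω, and F_{≥ω} the subgroup generated by all x_{ω'} with ω' ≥ ω. Then F_{>ω} and F_{≥ω} are invariant under every element of Ψ, and for each ψ ∈ Ψ there exists y ∈ F_{>ω} with ψ(x_ω) = y x_ω y⁻¹. -/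
open scoped Classical

/-- The subgroup `F_{>ω}` of `F` generated by the `x_{ω'}` with `ω' > ω`. -/
def Fgt (Ω : Type) [PartialOrder Ω] (ω : Ω) : Subgroup (FP Ω) :=
  Subgroup.closure {x | ∃ ω' : Ω, ω < ω' ∧ x = xg ω'}

/-- The subgroup `F_{≥ω}` of `F` generated by the `x_{ω'}` with `ω' ≥ ω`. -/
def Fge (Ω : Type) [PartialOrder Ω] (ω : Ω) : Subgroup (FP Ω) :=
  Subgroup.closure {x | ∃ ω' : Ω, ω ≤ ω' ∧ x = xg ω'}

/-- The subgroup `Ψ ≤ Aut(F)` generated by the automorphisms `ψ_ω`. -/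
def PsiSub {Ω : Type} (ψA : Ω → MulAut (FP Ω)) : Subgroup (MulAut (FP Ω)) :=
  Subgroup.closure (Set.range ψA)

lemma xg_sq {Ω : Type} (δ : Ω) : xg δ * xg δ = 1 := by
  have h : (FreeGroup.of δ ^ 2 : FreeGroup Ω) ∈ Subgroup.normalClosure (sqRels Ω) :=
    Subgroup.subset_normalClosure ⟨δ, rfl⟩
  have : (xg δ) ^ 2 = 1 := (QuotientGroup.eq_one_iff _).2 h
  rwa [sq] at this

lemma xg_inv {Ω : Type} (δ : Ω) : (xg δ)⁻¹ = xg δ :=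
  inv_eq_of_mul_eq_one_right (xg_sq δ)

lemma psi_invol {Ω : Type} [PartialOrder Ω] {δ : Ω} {ψ : MulAut (FP Ω)}
    (h : IsPsiAut δ ψ) (γ : Ω) : ψ (ψ (xg γ)) = xg γ := by
  by_cases hγ : γ < δ
  · have hδ : ψ (xg δ) = xg δ := by simpa [lt_irrefl] using h δ
    rw [h γ, if_pos hγ, map_mul, map_mul, hδ, h γ, if_pos hγ]
    calc xg δ * (xg δ * xg γ * xg δ) * xg δ
        = xg δ * xg δ * xg γ * (xg δ * xg δ) := by group
      _ = xg γ := by rw [xg_sq]; simp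
  · rw [h γ, if_neg hγ, h γ, if_neg hγ]

lemma map_closure_eq {G : Type*} [Group G] (ψ : MulAut G) (T : Set G)
    (h1 : ∀ t ∈ T, ψ t ∈ Subgroup.closure T)
    (h2 : ∀ t ∈ T, ∃ s ∈ Subgroup.closure T, ψ s = t) :
    (Subgroup.closure T).map ψ.toMonoidHom = Subgroup.closure T := by
  apply le_antisymm
  · rw [Subgroup.map_le_iff_le_comap, Subgroup.closure_le]
    exact fun t ht => h1 t ht
  · rw [Subgroup.closure_le]
    intro t ht
    obtain ⟨s, hs, hst⟩ := h2 t ht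
    exact ⟨s, hs, hst⟩

/-- The subgroups `F_{>ω}` and `F_{≥ω}` are invariant under every element of `Ψ`, and
for each `ψ ∈ Ψ` there is `y ∈ F_{>ω}` with `ψ(x_ω) = y x_ω y⁻¹`. -/
theorem Fgt_Fge_invariant (Ω : Type) [PartialOrder Ω] [Fintype Ω]
    (ψA : Ω → MulAut (FP Ω)) (hψ : ∀ ω, IsPsiAut ω (ψA ω))
    (ω : Ω) (ψ : MulAut (FP Ω)) (hmem : ψ ∈ PsiSub ψA) :
    (Fgt Ω ω).map ψ.toMonoidHom = Fgt Ω ω ∧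
    (Fge Ω ω).map ψ.toMonoidHom = Fge Ω ω ∧
    ∃ y ∈ Fgt Ω ω, ψ (xg ω) = y * xg ω * y⁻¹ := by
  induction hmem using Subgroup.closure_induction with
  | mem φ hφ =>
    obtain ⟨δ, rfl⟩ := hφ
    have hcompute : ∀ γ : Ω, (ψA δ) (xg γ) = if γ < δ then xg δ * xg γ * xg δ else xg γ := hψ δ
    -- invariance of Fgt
    have hgt : (Fgt Ω ω).map (ψA δ).toMonoidHom = Fgt Ω ω := by
      apply map_closure_eq
      · rintro t ⟨ω', hω', rfl⟩
        rw [hcompute ω']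
        have hx : xg ω' ∈ Fgt Ω ω := Subgroup.subset_closure ⟨ω', hω', rfl⟩
        split_ifs with h
        · exact mul_mem (mul_mem (Subgroup.subset_closure ⟨δ, hω'.trans h, rfl⟩) hx)
            (Subgroup.subset_closure ⟨δ, hω'.trans h, rfl⟩)
        · exact hx
      · rintro t ⟨ω', hω', rfl⟩
        refine ⟨(ψA δ) (xg ω'), ?_, psi_invol (hψ δ) ω'⟩
        rw [hcompute ω']
        have hx : xg ω' ∈ Fgt Ω ω := Subgroup.subset_closure ⟨ω', hω', rfl⟩
        split_ifs with h
        · exact mul_mem (mul_mem (Subgroup.subset_closure ⟨δ, hω'.trans h, rfl⟩) hx)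
            (Subgroup.subset_closure ⟨δ, hω'.trans h, rfl⟩)
        · exact hx
    have hge : (Fge Ω ω).map (ψA δ).toMonoidHom = Fge Ω ω := by
      apply map_closure_eq
      · rintro t ⟨ω', hω', rfl⟩
        rw [hcompute ω']
        have hx : xg ω' ∈ Fge Ω ω := Subgroup.subset_closure ⟨ω', hω', rfl⟩
        split_ifs with h
        · exact mul_mem (mul_mem (Subgroup.subset_closure ⟨δ, hω'.trans h.le, rfl⟩) hx)
            (Subgroup.subset_closure ⟨δ, hω'.trans h.le, rfl⟩)
        · exact hx
      · rintro t ⟨ω', hω', rfl⟩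
        refine ⟨(ψA δ) (xg ω'), ?_, psi_invol (hψ δ) ω'⟩
        rw [hcompute ω']
        have hx : xg ω' ∈ Fge Ω ω := Subgroup.subset_closure ⟨ω', hω', rfl⟩
        split_ifs with h
        · exact mul_mem (mul_mem (Subgroup.subset_closure ⟨δ, hω'.trans h.le, rfl⟩) hx)
            (Subgroup.subset_closure ⟨δ, hω'.trans h.le, rfl⟩)
        · exact hx
    refine ⟨hgt, hge, ?_⟩
    by_cases h : ω < δ
    · exact ⟨xg δ, Subgroup.subset_closure ⟨δ, h, rfl⟩, by
        rw [hcompute ω, if_pos h, xg_inv]⟩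
    · exact ⟨1, one_mem _, by rw [hcompute ω, if_neg h]; group⟩
  | one =>
    refine ⟨?_, ?_, 1, one_mem _, by simp⟩
    · show (Fgt Ω ω).map (MonoidHom.id _) = _; exact Subgroup.map_id _
    · show (Fge Ω ω).map (MonoidHom.id _) = _; exact Subgroup.map_id _
  | mul φ χ hφm hχm ihφ ihχ =>
    obtain ⟨hgt1, hge1, y, hy, hyc⟩ := ihφ
    obtain ⟨hgt2, hge2, z, hz, hzc⟩ := ihχ
    have hmap : ∀ {S : Subgroup (FP Ω)}, S.map φ.toMonoidHom = S → S.map χ.toMonoidHom = S →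
        S.map (φ * χ).toMonoidHom = S := by
      intro S h1 h2
      have : (φ * χ).toMonoidHom = φ.toMonoidHom.comp χ.toMonoidHom := rfl
      rw [this, ← Subgroup.map_map, h2, h1]
    refine ⟨hmap hgt1 hgt2, hmap hge1 hge2, φ z * y, ?_, ?_⟩
    · refine mul_mem ?_ hy
      rw [← hgt1]
      exact ⟨z, hz, rfl⟩
    · show φ (χ (xg ω)) = _
      rw [hzc, map_mul, map_mul, hyc, map_inv]
      group
  | inv φ hφm ihφ =>
    obtain ⟨hgt1, hge1, y, hy, hyc⟩ := ihφ
    have hmapinv : ∀ {S : Subgroup (FP Ω)}, S.map φ.toMonoidHom = S →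
        S.map φ⁻¹.toMonoidHom = S := by
      intro S h1
      conv_lhs => rw [← h1]
      rw [Subgroup.map_map]
      have : φ⁻¹.toMonoidHom.comp φ.toMonoidHom = MonoidHom.id _ := by
        ext x; simp
      rw [this, Subgroup.map_id]
    refine ⟨hmapinv hgt1, hmapinv hge1, φ⁻¹ y⁻¹, ?_, ?_⟩
    · rw [← hmapinv hgt1]
      exact ⟨y⁻¹, inv_mem hy, rfl⟩
    · have h1 : xg ω = φ⁻¹ y * φ⁻¹ (xg ω) * (φ⁻¹ y)⁻¹ := by
        conv_lhs => rw [← MulAut.inv_apply_self _ φ (xg ω), hyc]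
        rw [map_mul, map_mul, map_inv]
      have h2 : (φ⁻¹ y)⁻¹ * xg ω * (φ⁻¹ y) = φ⁻¹ (xg ω) := by
        conv_lhs => rw [h1]
        group
      show φ⁻¹ (xg ω) = _
      rw [map_inv, inv_inv]
      exact h2.symm
end

section
/- Let Z be a compact n-dimensional pseudo-manifold whose vertices are regularly coloured in n+1 colours, with the induced chess (black/white) colouring of n-simplices. For every simplex τ of Z with dim τ < n, the number of white n-simplices containing τ equals the number of black n-simplices containing τ. -/
open scoped Classical

/-- Let `Z` be a finite `n`-dimensional pseudo-manifold (a down-closed family `K` of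
finite sets: every simplex is contained in an `n`-simplex, i.e. a face with `n+1`
vertices, and every `(n-1)`-simplex lies in exactly two `n`-simplices), with a regular
colouring `c` of its vertices in `n+1` colours and a chess (black/white) colouring
`col` of its `n`-simplices, in which `n`-simplices sharing an `(n-1)`-face get opposite
colours. Then for every simplex `τ` of dimension `< n`, the number of white
`n`-simplices containing `τ` equals the number of black `n`-simplices containing `τ`. -/
theorem chess_colouring_balanced {V : Type} [DecidableEq V] (n : ℕ)
    (K : Finset (Finset V))
    (hdown : ∀ s ∈ K, ∀ t ⊆ s, t ∈ K)
    (hpure : ∀ s ∈ K, ∃ σ ∈ K, σ.card = n + 1 ∧ s ⊆ σ)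
    (c : V → Fin (n + 1))
    (hreg : ∀ s ∈ K, ∀ u ∈ s, ∀ v ∈ s, u ≠ v → c u ≠ c v)
    (hpm : ∀ ρ ∈ K, ρ.card = n →
      (K.filter fun σ => σ.card = n + 1 ∧ ρ ⊆ σ).card = 2)
    (col : Finset V → Bool)
    (hchess : ∀ σ₁ ∈ K, ∀ σ₂ ∈ K, σ₁.card = n + 1 → σ₂.card = n + 1 → σ₁ ≠ σ₂ →
      (σ₁ ∩ σ₂).card = n → col σ₁ ≠ col σ₂)
    (τ : Finset V) (hτ : τ ∈ K) (hτcard : τ.card ≤ n) :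
    (K.filter fun σ => σ.card = n + 1 ∧ τ ⊆ σ ∧ col σ = true).card =
      (K.filter fun σ => σ.card = n + 1 ∧ τ ⊆ σ ∧ col σ = false).card := by
  classical
  set R := K.filter (fun ρ => ρ.card = n ∧ τ ⊆ ρ) with hR
  -- Lemma A: each ρ ∈ R lies in exactly one n-simplex of each colour
  have lemA : ∀ ρ ∈ R, ∀ b : Bool,
      (K.filter fun σ => σ.card = n + 1 ∧ ρ ⊆ σ ∧ col σ = b).card = 1 := by
    intro ρ hρ b
    rw [hR, Finset.mem_filter] at hρ
    obtain ⟨hρK, hρn, hτρ⟩ := hρ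
    have h2 := hpm ρ hρK hρn
    obtain ⟨σ₁, σ₂, hne, hS⟩ := Finset.card_eq_two.mp h2
    have hσ₁ : σ₁ ∈ K.filter fun σ => σ.card = n + 1 ∧ ρ ⊆ σ := by
      rw [hS]; simp
    have hσ₂ : σ₂ ∈ K.filter fun σ => σ.card = n + 1 ∧ ρ ⊆ σ := by
      rw [hS]; simp
    rw [Finset.mem_filter] at hσ₁ hσ₂
    obtain ⟨h1K, h1c, h1s⟩ := hσ₁
    obtain ⟨h2K, h2c, h2s⟩ := hσ₂
    have hint : (σ₁ ∩ σ₂).card = n := by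
      have hle : (σ₁ ∩ σ₂).card ≤ n + 1 :=
        h1c ▸ Finset.card_le_card (Finset.inter_subset_left)
      have hge : n ≤ (σ₁ ∩ σ₂).card := by
        have : ρ ⊆ σ₁ ∩ σ₂ := Finset.subset_inter h1s h2s
        exact hρn ▸ Finset.card_le_card this
      rcases Nat.lt_or_ge (σ₁ ∩ σ₂).card (n + 1) with h | h
      · omega
      · exfalso
        have heq : σ₁ ∩ σ₂ = σ₁ := Finset.eq_of_subset_of_card_le
          Finset.inter_subset_left (by omega)
        have hsub : σ₁ ⊆ σ₂ := by
          rw [← heq]; exact Finset.inter_subset_right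
        exact hne (Finset.eq_of_subset_of_card_le hsub (by omega))
    have hcol : col σ₁ ≠ col σ₂ := hchess σ₁ h1K σ₂ h2K h1c h2c hne hint
    have hfe : (K.filter fun σ => σ.card = n + 1 ∧ ρ ⊆ σ ∧ col σ = b) =
        (K.filter fun σ => σ.card = n + 1 ∧ ρ ⊆ σ).filter (fun σ => col σ = b) := by
      rw [Finset.filter_filter]
      apply Finset.filter_congr
      intro σ _
      tauto
    rw [hfe, hS]
    have : ({σ₁, σ₂} : Finset (Finset V)).filter (fun σ => col σ = b) =
        if col σ₁ = b then {σ₁} else {σ₂} := by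
      rw [Finset.filter_insert, Finset.filter_singleton]
      split_ifs with hb1 hb2 hb2
      · exact absurd (hb1.trans hb2.symm) hcol
      · rfl
      · rfl
      · exfalso
        revert hcol hb1 hb2
        cases b <;> cases hcb1 : col σ₁ <;> cases hcb2 : col σ₂ <;> simp_all
    rw [this]
    split_ifs <;> simp
  -- Lemma B: each n-simplex containing τ contains exactly n+1−|τ| faces ρ ∈ R
  have lemB : ∀ σ ∈ K, σ.card = n + 1 → τ ⊆ σ →
      (K.filter fun ρ => ρ.card = n ∧ τ ⊆ ρ ∧ ρ ⊆ σ).card = n + 1 - τ.card := by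
    intro σ hσK hσc hτσ
    have hcard : (σ \ τ).card = n + 1 - τ.card := by
      rw [Finset.card_sdiff_of_subset hτσ, hσc]
    rw [← hcard]
    symm
    apply Finset.card_bij (fun v _ => σ.erase v)
    · intro v hv
      rw [Finset.mem_sdiff] at hv
      rw [Finset.mem_filter]
      refine ⟨hdown σ hσK _ (Finset.erase_subset _ _), ?_, ?_, Finset.erase_subset _ _⟩
      · rw [Finset.card_erase_of_mem hv.1, hσc]; omega
      · exact Finset.subset_erase.mpr ⟨hτσ, hv.2⟩
    · intro v hv w hw heq
      rw [Finset.mem_sdiff] at hv hw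
      by_contra hvw
      have : v ∈ σ.erase w := Finset.mem_erase.mpr ⟨hvw, hv.1⟩
      rw [← heq] at this
      exact (Finset.mem_erase.mp this).1 rfl
    · intro ρ hρ
      rw [Finset.mem_filter] at hρ
      obtain ⟨hρK, hρc, hτρ, hρσ⟩ := hρ
      have h1 : (σ \ ρ).card = 1 := by
        rw [Finset.card_sdiff_of_subset hρσ, hσc, hρc]; omega
      obtain ⟨v, hv⟩ := Finset.card_eq_one.mp h1
      have hvm : v ∈ σ \ ρ := hv ▸ Finset.mem_singleton_self v
      rw [Finset.mem_sdiff] at hvm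
      refine ⟨v, Finset.mem_sdiff.mpr ⟨hvm.1, fun hvτ => hvm.2 (hτρ hvτ)⟩, ?_⟩
      rw [Finset.erase_eq, ← hv, Finset.sdiff_sdiff_self_left,
        Finset.inter_eq_right.mpr hρσ]
  -- Double counting
  have key : ∀ b : Bool,
      R.card = (K.filter fun σ => σ.card = n + 1 ∧ τ ⊆ σ ∧ col σ = b).card
        * (n + 1 - τ.card) := by
    intro b
    set W := K.filter fun σ => σ.card = n + 1 ∧ τ ⊆ σ ∧ col σ = b with hW
    calc R.card = ∑ ρ ∈ R, (W.filter (fun σ => ρ ⊆ σ)).card := by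
          rw [Finset.sum_congr rfl (fun ρ hρ => ?_), Finset.sum_const, smul_eq_mul,
            mul_one]
          have : W.filter (fun σ => ρ ⊆ σ) =
              K.filter fun σ => σ.card = n + 1 ∧ ρ ⊆ σ ∧ col σ = b := by
            rw [hW, Finset.filter_filter]
            apply Finset.filter_congr
            intro σ _
            have hτρ : τ ⊆ ρ := by
              rw [hR, Finset.mem_filter] at hρ; exact hρ.2.2
            constructor
            · rintro ⟨⟨hc, _, hb⟩, hs⟩; exact ⟨hc, hs, hb⟩
            · rintro ⟨hc, hs, hb⟩; exact ⟨⟨hc, hτρ.trans hs, hb⟩, hs⟩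
          rw [this, lemA ρ hρ b]
      _ = ∑ ρ ∈ R, ∑ σ ∈ W, if ρ ⊆ σ then 1 else 0 :=
          Finset.sum_congr rfl (fun ρ _ => Finset.card_filter _ _)
      _ = ∑ σ ∈ W, ∑ ρ ∈ R, if ρ ⊆ σ then 1 else 0 := Finset.sum_comm
      _ = ∑ σ ∈ W, (R.filter (fun ρ => ρ ⊆ σ)).card :=
          Finset.sum_congr rfl (fun σ _ => (Finset.card_filter _ _).symm)
      _ = ∑ σ ∈ W, (n + 1 - τ.card) := by
          apply Finset.sum_congr rfl
          intro σ hσ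
          rw [hW, Finset.mem_filter] at hσ
          obtain ⟨hσK, hσc, hτσ, _⟩ := hσ
          have : R.filter (fun ρ => ρ ⊆ σ) =
              K.filter fun ρ => ρ.card = n ∧ τ ⊆ ρ ∧ ρ ⊆ σ := by
            rw [hR, Finset.filter_filter]
            apply Finset.filter_congr
            intro ρ _
            tauto
          rw [this, lemB σ hσK hσc hτσ]
      _ = W.card * (n + 1 - τ.card) := by rw [Finset.sum_const, smul_eq_mul]
  have h1 := key true
  have h2 := key false
  have hm : 0 < n + 1 - τ.card := by omega
  exact Nat.eq_of_mul_eq_mul_right hm (by omega)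
end

section
/- Let o be the centre of the permutahedron Πⁿ and let x ∈ F_{ω₁}, y ∈ F_{ω₂} be points of non-intersecting facets (i.e., ω₁ ⊄ ω₂ and ω₂ ⊄ ω₁). Let ξ = x − o and η = y − o. Then the cosine of the angle between ξ and η satisfies (ξ,η)/(|ξ||η|) ≤ 1 − 12/(n(n+1)(n+2)). -/
open scoped BigOperators

/-- The vertices of the permutahedron `Πⁿ ⊂ ℝ^{n+1}`. -/
def permVerts (n : ℕ) : Set (Fin (n + 1) → ℝ) :=
  {v | ∃ σ : Equiv.Perm (Fin (n + 1)), ∀ i, v i = ((σ i : ℕ) : ℝ) + 1}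

/-- The permutahedron `Πⁿ`. -/
def permutahedron (n : ℕ) : Set (Fin (n + 1) → ℝ) := convexHull ℝ (permVerts n)

/-- The value `∑_{j = n-|ω|+2}^{n+1} j` appearing in the equation of the facet `F_ω`. -/
def facetLevel (n k : ℕ) : ℝ := ∑ j ∈ Finset.Ioc (n + 1 - k) (n + 1), (j : ℝ)

/-- The facet `F_ω` of the permutahedron. -/
def permFacet (n : ℕ) (ω : Finset (Fin (n + 1))) : Set (Fin (n + 1) → ℝ) :=
  {x ∈ permutahedron n | ∑ i ∈ ω, x i = facetLevel n ω.card}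

/-!
A point of the facet `F_ω` is a convex combination of vertices lying on `F_ω`, and at such a
vertex, a permutation of `1, …, n+1` taking its `|ω|` largest values on `ω`, every coordinate
in `ω` exceeds every coordinate outside `ω` by at least one. Choosing `j ∈ ω₁ \ ω₂` and
`k ∈ ω₂ \ ω₁` thus gives `ξ_j - ξ_k ≥ 1` and `η_k - η_j ≥ 1`. Cauchy–Schwarz for `ξ` and `η`
with its coordinates `j`, `k` swapped reads `(ξ,η) + (ξ_j - ξ_k)(η_k - η_j) ≤ |ξ||η|`, and
`|ξ|, |η| ≤ R_n` since the squared distance to `o` is convex and equals `R_n²` at every vertex.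
-/

open Finset

theorem mem_convexHull_setOf_eq_of_le {𝕜 E : Type*} [Field 𝕜] [LinearOrder 𝕜]
    [IsStrictOrderedRing 𝕜] [AddCommGroup E] [Module 𝕜 E] {V : Set E} (f : E →ₗ[𝕜] 𝕜) {L : 𝕜}
    (hV : ∀ v ∈ V, f v ≤ L) {x : E} (hx : x ∈ convexHull 𝕜 V) (hfx : f x = L) :
    x ∈ convexHull 𝕜 {v ∈ V | f v = L} := by
  classical
  rw [_root_.convexHull_eq] at hx
  obtain ⟨ι, t, w, z, hw₀, hw₁, hz, rfl⟩ := hx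
  have hslack : ∑ i ∈ t, w i * (L - f (z i)) = 0 := by
    rw [centerMass_eq_of_sum_1 _ _ hw₁, map_sum] at hfx
    simp only [map_smul, smul_eq_mul] at hfx
    simp only [mul_sub, sum_sub_distrib, ← sum_mul, hw₁, one_mul, hfx, sub_self]
  have hzero := (sum_eq_zero_iff_of_nonneg fun i hi =>
    mul_nonneg (hw₀ i hi) (sub_nonneg.2 (hV _ (hz i hi)))).1 hslack
  rw [← centerMass_filter_ne_zero]
  refine centerMass_mem_convexHull _ (fun i hi => hw₀ i (filter_subset _ _ hi)) ?_ ?_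
  · rw [sum_filter_ne_zero, hw₁]; exact one_pos
  · intro i hi
    obtain ⟨hit, hwi⟩ := mem_filter.1 hi
    exact ⟨hz i hit, (sub_eq_zero.1 ((mul_eq_zero.1 (hzero i hit)).resolve_left hwi)).symm⟩

theorem convexOn_sum_sq_sub {ι : Type*} [Fintype ι] (c : ι → ℝ) :
    ConvexOn ℝ Set.univ (fun z : ι → ℝ => ∑ i, (z i - c i) ^ 2) := by
  have hterm (i : ι) : ConvexOn ℝ Set.univ (fun z : ι → ℝ => (z i - c i) ^ 2) :=
    (even_two.convexOn_pow).comp_affineMap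
      ((LinearMap.proj i : (ι → ℝ) →ₗ[ℝ] ℝ).toAffineMap - AffineMap.const ℝ _ (c i))
  simpa only [sum_fn] using
    sum_induction _ (ConvexOn ℝ Set.univ) (fun _ _ => ConvexOn.add)
      (convexOn_const 0 convex_univ) fun i _ => hterm i

theorem sum_mul_add_mul_sub_le_sqrt_mul_sqrt {ι : Type*} [Fintype ι] [DecidableEq ι]
    (f g : ι → ℝ) (j k : ι) :
    ∑ i, f i * g i + (f j - f k) * (g k - g j) ≤ √(∑ i, f i ^ 2) * √(∑ i, g i ^ 2) := by
  have hswap : ∑ i, f i * g (Equiv.swap j k i) = ∑ i, f i * g i + (f j - f k) * (g k - g j) := by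
    rcases eq_or_ne j k with rfl | hjk
    · simp
    rw [← sub_eq_iff_eq_add', ← sum_sub_distrib,
      Fintype.sum_eq_add j k hjk fun i hi => by simp [Equiv.swap_apply_of_ne_of_ne hi.1 hi.2]]
    simp only [Equiv.swap_apply_left, Equiv.swap_apply_right]
    ring
  rw [← hswap, ← Equiv.sum_comp (Equiv.swap j k) (fun i => g i ^ 2)]
  exact Real.sum_mul_le_sqrt_mul_sqrt _ _ _

-- The extra summand makes the equality case `S = Ioc (N - #S) N` fall out.
theorem sum_add_card_sdiff_Ioc_le {N : ℕ} {S : Finset ℕ} (hS : S ⊆ Ioc 0 N) :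
    ∑ s ∈ S, s + #(S \ Ioc (N - #S) N) ≤ ∑ j ∈ Ioc (N - #S) N, j := by
  set T := Ioc (N - #S) N
  have hST : #S ≤ N := by simpa using card_le_card hS
  have hcard : #(S \ T) = #(T \ S) := card_sdiff_comm (by simp [T]; omega)
  have hlow : ∑ s ∈ S \ T, s ≤ #(S \ T) * (N - #S) := by
    simpa using sum_le_card_nsmul (S \ T) id (N - #S) fun s hs => by
      have := hS (mem_sdiff.1 hs).1
      simp only [T, mem_sdiff, mem_Ioc] at hs this
      simp only [id]; omega
  have hhigh : #(T \ S) * (N - #S + 1) ≤ ∑ t ∈ T \ S, t := by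
    simpa using card_nsmul_le_sum (T \ S) id (N - #S + 1) fun t ht => by
      simp only [T, mem_sdiff, mem_Ioc] at ht
      simp only [id]; omega
  have hsplitS := sum_inter_add_sum_sdiff S T id
  have hsplitT := sum_inter_add_sum_sdiff T S id
  rw [inter_comm] at hsplitT
  simp only [id] at hsplitS hsplitT
  nlinarith

section InjectiveIoc

variable {ι : Type*} {N : ℕ} {a : ι → ℕ}

theorem sum_add_card_image_sdiff_Ioc_le (ha : Function.Injective a) (haN : ∀ i, a i ∈ Ioc 0 N)
    (ω : Finset ι) :
    ∑ i ∈ ω, a i + #(ω.image a \ Ioc (N - #ω) N) ≤ ∑ j ∈ Ioc (N - #ω) N, j := by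
  have := sum_add_card_sdiff_Ioc_le (S := ω.image a) (by simpa [subset_iff] using fun i _ => haN i)
  rwa [card_image_of_injective _ ha, sum_image ha.injOn] at this

theorem sum_le_sum_Ioc_of_injective (ha : Function.Injective a) (haN : ∀ i, a i ∈ Ioc 0 N)
    (ω : Finset ι) : ∑ i ∈ ω, a i ≤ ∑ j ∈ Ioc (N - #ω) N, j :=
  le_of_add_le_left (sum_add_card_image_sdiff_Ioc_le ha haN ω)

theorem lt_of_sum_eq_sum_Ioc (ha : Function.Injective a) (haN : ∀ i, a i ∈ Ioc 0 N)
    {ω : Finset ι} (hω : ∑ i ∈ ω, a i = ∑ j ∈ Ioc (N - #ω) N, j) {j l : ι} (hj : j ∈ ω)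
    (hl : l ∉ ω) : a l < a j := by
  have hsub : ω.image a ⊆ Ioc (N - #ω) N := by
    have := sum_add_card_image_sdiff_Ioc_le ha haN ω
    exact sdiff_eq_empty_iff_subset.1 (card_eq_zero.1 (by omega))
  have htop : ω.image a = Ioc (N - #ω) N := by
    refine eq_of_subset_of_card_le hsub ?_
    rw [card_image_of_injective _ ha, Nat.card_Ioc]
    omega
  have hj' : a j ∈ Ioc (N - #ω) N := htop ▸ mem_image_of_mem a hj
  have hl' : a l ∉ Ioc (N - #ω) N := htop ▸ by simpa [ha.eq_iff] using hl
  have := haN l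
  simp only [mem_Ioc] at hj' hl' this
  omega

end InjectiveIoc

section Permutahedron

variable {n : ℕ}

theorem facetLevel_eq_natCast (n k : ℕ) :
    facetLevel n k = ((∑ j ∈ Ioc (n + 1 - k) (n + 1), j : ℕ) : ℝ) := by
  simp [facetLevel]

theorem exists_injective_of_mem_permVerts {v : Fin (n + 1) → ℝ} (hv : v ∈ permVerts n) :
    ∃ a : Fin (n + 1) → ℕ, Function.Injective a ∧ (∀ i, a i ∈ Ioc 0 (n + 1)) ∧
      v = fun i => (a i : ℝ) := by
  obtain ⟨σ, hσ⟩ := hv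
  refine ⟨fun i => σ i + 1, fun i i' h => σ.injective (Fin.val_injective (by simpa using h)),
    fun i => by simp [Fin.is_le], funext fun i => by simp [hσ]⟩

theorem sum_le_facetLevel_of_mem_permVerts {v : Fin (n + 1) → ℝ} (hv : v ∈ permVerts n)
    (ω : Finset (Fin (n + 1))) : ∑ i ∈ ω, v i ≤ facetLevel n #ω := by
  obtain ⟨a, ha, haN, rfl⟩ := exists_injective_of_mem_permVerts hv
  rw [facetLevel_eq_natCast, ← Nat.cast_sum]
  exact_mod_cast sum_le_sum_Ioc_of_injective ha haN ω

theorem add_one_le_of_sum_eq_facetLevel {v : Fin (n + 1) → ℝ} (hv : v ∈ permVerts n)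
    {ω : Finset (Fin (n + 1))} (hω : ∑ i ∈ ω, v i = facetLevel n #ω) {j l : Fin (n + 1)}
    (hj : j ∈ ω) (hl : l ∉ ω) : v l + 1 ≤ v j := by
  obtain ⟨a, ha, haN, rfl⟩ := exists_injective_of_mem_permVerts hv
  rw [facetLevel_eq_natCast, ← Nat.cast_sum] at hω
  show (a l : ℝ) + 1 ≤ a j
  exact_mod_cast lt_of_sum_eq_sum_Ioc ha haN (by exact_mod_cast hω) hj hl

theorem add_one_le_of_mem_permFacet {ω : Finset (Fin (n + 1))} {x : Fin (n + 1) → ℝ}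
    (hx : x ∈ permFacet n ω) {j l : Fin (n + 1)} (hj : j ∈ ω) (hl : l ∉ ω) :
    x l + 1 ≤ x j := by
  have hface : x ∈ convexHull ℝ {v ∈ permVerts n | ∑ i ∈ ω, v i = facetLevel n #ω} := by
    simpa using mem_convexHull_setOf_eq_of_le (∑ i ∈ ω, LinearMap.proj i)
      (fun v hv => by simpa using sum_le_facetLevel_of_mem_permVerts hv ω) hx.1
      (by simpa using hx.2)
  have hhalf : Convex ℝ {z : Fin (n + 1) → ℝ | z l - z j ≤ -1} :=
    convex_halfSpace_le (f := fun z : Fin (n + 1) → ℝ => z l - z j)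
      (LinearMap.proj (R := ℝ) (φ := fun _ => ℝ) l - LinearMap.proj j).isLinear (-1)
  have : x l - x j ≤ -1 := convexHull_min (fun v hv => show v l - v j ≤ (-1 : ℝ) by
    linarith [add_one_le_of_sum_eq_facetLevel hv.1 hv.2 hj hl]) hhalf hface
  linarith

theorem sum_range_add_one_sub_sq (m : ℕ) (c : ℝ) :
    ∑ i ∈ range m, ((i : ℝ) + 1 - c) ^ 2
      = m * (m + 1) * (2 * m + 1) / 6 - c * m * (m + 1) + m * c ^ 2 := by
  induction m with
  | zero => simp
  | succ m ih => rw [sum_range_succ, ih]; push_cast; ring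

theorem sum_sq_sub_center_of_mem_permVerts {v : Fin (n + 1) → ℝ} (hv : v ∈ permVerts n) :
    ∑ i, (v i - ((n : ℝ) + 2) / 2) ^ 2 = (n : ℝ) * ((n : ℝ) + 1) * ((n : ℝ) + 2) / 12 := by
  obtain ⟨σ, hσ⟩ := hv
  simp_rw [hσ]
  rw [Equiv.sum_comp σ fun i => (((i : ℕ) : ℝ) + 1 - ((n : ℝ) + 2) / 2) ^ 2,
    Fin.sum_univ_eq_sum_range fun i => ((i : ℝ) + 1 - ((n : ℝ) + 2) / 2) ^ 2,
    sum_range_add_one_sub_sq]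
  push_cast
  ring

theorem sum_sq_sub_center_le_of_mem_permutahedron {x : Fin (n + 1) → ℝ}
    (hx : x ∈ permutahedron n) :
    ∑ i, (x i - ((n : ℝ) + 2) / 2) ^ 2 ≤ (n : ℝ) * ((n : ℝ) + 1) * ((n : ℝ) + 2) / 12 := by
  obtain ⟨v, hv, hxv⟩ :=
    (convexOn_sum_sq_sub fun _ => ((n : ℝ) + 2) / 2).exists_ge_of_mem_convexHull
      (Set.subset_univ _) hx
  exact hxv.trans (sum_sq_sub_center_of_mem_permVerts hv).le

end Permutahedron

theorem permFacet_angle_bound_general (n : ℕ)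
    (ω₁ ω₂ : Finset (Fin (n + 1)))
    (hns₁ : ¬ω₁ ⊆ ω₂) (hns₂ : ¬ω₂ ⊆ ω₁)
    (x y : Fin (n + 1) → ℝ) (hx : x ∈ permFacet n ω₁) (hy : y ∈ permFacet n ω₂) :
    ∑ i, (x i - ((n : ℝ) + 2) / 2) * (y i - ((n : ℝ) + 2) / 2) ≤
      (1 - 12 / ((n : ℝ) * ((n : ℝ) + 1) * ((n : ℝ) + 2))) *
        (Real.sqrt (∑ i, (x i - ((n : ℝ) + 2) / 2) ^ 2) *
          Real.sqrt (∑ i, (y i - ((n : ℝ) + 2) / 2) ^ 2)) := by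
  obtain ⟨j, hj₁, hj₂⟩ := not_subset.1 hns₁
  obtain ⟨k, hk₂, hk₁⟩ := not_subset.1 hns₂
  set c : ℝ := ((n : ℝ) + 2) / 2
  set D : ℝ := (n : ℝ) * ((n : ℝ) + 1) * ((n : ℝ) + 2)
  set ξ : Fin (n + 1) → ℝ := fun i => x i - c
  set η : Fin (n + 1) → ℝ := fun i => y i - c
  have hgap : 1 ≤ (ξ j - ξ k) * (η k - η j) := by
    have := add_one_le_of_mem_permFacet hx hj₁ hk₁
    have := add_one_le_of_mem_permFacet hy hk₂ hj₂
    exact one_le_mul_of_one_le_of_one_le (by simp [ξ]; linarith) (by simp [η]; linarith)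
  have hCS := sum_mul_add_mul_sub_le_sqrt_mul_sqrt ξ η j k
  have hnorms : √(∑ i, ξ i ^ 2) * √(∑ i, η i ^ 2) ≤ D / 12 :=
    calc √(∑ i, ξ i ^ 2) * √(∑ i, η i ^ 2) ≤ √(D / 12) * √(D / 12) :=
          mul_le_mul (Real.sqrt_le_sqrt (sum_sq_sub_center_le_of_mem_permutahedron hx.1))
            (Real.sqrt_le_sqrt (sum_sq_sub_center_le_of_mem_permutahedron hy.1))
            (Real.sqrt_nonneg _) (Real.sqrt_nonneg _)
      _ = D / 12 := Real.mul_self_sqrt (by positivity)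
  -- For `n = 0` this holds because `12 / 0 = 0`.
  have hscaled : 12 / D * (√(∑ i, ξ i ^ 2) * √(∑ i, η i ^ 2)) ≤ 1 := by
    rw [div_mul_eq_mul_div]
    exact div_le_one_of_le₀ (by linarith) (by positivity)
  rw [sub_mul, one_mul]
  linarith

/-- If `x ∈ F_{ω₁}` and `y ∈ F_{ω₂}` lie on non-intersecting facets of `Πⁿ` (neither
`ω₁ ⊆ ω₂` nor `ω₂ ⊆ ω₁`), and `ξ = x − o`, `η = y − o` with `o` the centre of `Πⁿ`,
then `(ξ,η) ≤ (1 − 12/(n(n+1)(n+2)))·|ξ||η|`, i.e. the cosine of the angle between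
`ξ` and `η` is at most `1 − 12/(n(n+1)(n+2))`. -/
theorem permFacet_angle_bound (n : ℕ)
    (ω₁ ω₂ : Finset (Fin (n + 1))) (h₁ : ω₁.Nonempty) (h₁' : ω₁ ≠ Finset.univ)
    (h₂ : ω₂.Nonempty) (h₂' : ω₂ ≠ Finset.univ)
    (hns₁ : ¬ω₁ ⊆ ω₂) (hns₂ : ¬ω₂ ⊆ ω₁)
    (x y : Fin (n + 1) → ℝ) (hx : x ∈ permFacet n ω₁) (hy : y ∈ permFacet n ω₂) :
    ∑ i, (x i - ((n : ℝ) + 2) / 2) * (y i - ((n : ℝ) + 2) / 2) ≤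
      (1 - 12 / ((n : ℝ) * ((n : ℝ) + 1) * ((n : ℝ) + 2))) *
        (Real.sqrt (∑ i, (x i - ((n : ℝ) + 2) / 2) ^ 2) *
          Real.sqrt (∑ i, (y i - ((n : ℝ) + 2) / 2) ^ 2)) :=
  permFacet_angle_bound_general n ω₁ ω₂ hns₁ hns₂ x y hx hy
end

section
/- For every non-empty proper subset ω ⊂ {1,…,n+1}, the distance from the centre o of the permutahedron Πⁿ to the affine hyperplane spanned by the facet F_ω is at least r_n = (1/2)√(n(n+1)), with equality when |ω| ∈ {1, n}. -/
open scoped BigOperators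

/-- The centre `o = ((n+2)/2, …, (n+2)/2)` of the permutahedron, as a point of
Euclidean space. -/
noncomputable def permCentre (n : ℕ) : EuclideanSpace ℝ (Fin (n + 1)) := WithLp.toLp 2 (fun _ => ((n : ℝ) + 2) / 2)

/-- The affine plane spanned by the facet `F_ω`: the intersection of the hyperplane
`∑_{i∈ω} t_i = ∑_{j=n-|ω|+2}^{n+1} j` with the hyperplane `∑ t_i = (n+1)(n+2)/2`
containing `Πⁿ`. -/
def facetPlane (n : ℕ) (ω : Finset (Fin (n + 1))) : Set (EuclideanSpace ℝ (Fin (n + 1))) :=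
  {x | (∑ i ∈ ω, x i = facetLevel n ω.card) ∧
    ∑ i, x i = ((n : ℝ) + 1) * ((n : ℝ) + 2) / 2}

/-!
Let `k = |ω|`. Writing `𝟙_ω` for the indicator vector of `ω`, the vector
`v = 𝟙_ω - (k/(n+1)) 𝟙` is orthogonal to `𝟙`, so both equations of the facet plane combine into
the single equation `⟪v, x - o⟫ = k(n+1-k)/2`, and the point `o + ((n+1)/2) v` satisfies both.
Hence the distance is `(k(n+1-k)/2) / ‖v‖ = (1/2)√((n+1) k (n+1-k))`, using
`‖v‖² = k(n+1-k)/(n+1)`, and `k(n+1-k) - n = (k-1)(n-k) ≥ 0` with equality iff `k ∈ {1, n}`.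
-/

open Finset

section InnerProductSpace

variable {E : Type*} [NormedAddCommGroup E] [InnerProductSpace ℝ E]

theorem div_norm_le_dist_of_inner_sub_eq {o v x : E} {c : ℝ} (hx : inner ℝ v (x - o) = c) :
    |c| / ‖v‖ ≤ dist o x := by
  rcases eq_or_ne v 0 with rfl | hv
  · simp
  rw [div_le_iff₀ (norm_pos_iff.2 hv), dist_comm, dist_eq_norm, mul_comm, ← hx]
  exact abs_real_inner_le_norm v (x - o)

theorem infDist_eq_of_inner_sub_eq {s : Set E} {o v : E} {c : ℝ} (hv : v ≠ 0)
    (hs : ∀ x ∈ s, inner ℝ v (x - o) = c) (hmem : o + (c / ‖v‖ ^ 2) • v ∈ s) :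
    Metric.infDist o s = |c| / ‖v‖ := by
  have hv' : 0 < ‖v‖ := norm_pos_iff.2 hv
  refine le_antisymm ((Metric.infDist_le_dist_of_mem hmem).trans_eq ?_)
    ((Metric.le_infDist ⟨_, hmem⟩).2 fun x hx => div_norm_le_dist_of_inner_sub_eq (hs x hx))
  rw [dist_self_add_right, norm_smul, Real.norm_eq_abs, abs_div, abs_of_pos (pow_pos hv' 2)]
  field_simp

end InnerProductSpace

theorem facetLevel_eq {n k : ℕ} (hk : k ≤ n + 1) :
    facetLevel n k = k * (2 * n + 3 - k) / 2 := by
  induction k with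
  | zero => simp [facetLevel]
  | succ k ih =>
    have hIoc : Ioc (n + 1 - (k + 1)) (n + 1) = insert (n + 1 - k) (Ioc (n + 1 - k) (n + 1)) := by
      have := insert_Ioc_succ_left_eq_Ioc (show n + 1 - (k + 1) < n + 1 by omega)
      rwa [Order.succ_eq_add_one, show n + 1 - (k + 1) + 1 = n + 1 - k by omega, eq_comm] at this
    rw [facetLevel, hIoc, sum_insert (by simp), ← facetLevel, ih (by omega),
      Nat.cast_sub (by omega)]
    push_cast
    ring

theorem sum_permCentre (n : ℕ) (s : Finset (Fin (n + 1))) :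
    ∑ i ∈ s, permCentre n i = s.card * ((n + 2) / 2) := by
  simp [permCentre]

noncomputable def facetNormal (n : ℕ) (ω : Finset (Fin (n + 1))) :
    EuclideanSpace ℝ (Fin (n + 1)) :=
  WithLp.toLp 2 fun i => (if i ∈ ω then 1 else 0) - ω.card / (n + 1)

variable {n : ℕ} {ω : Finset (Fin (n + 1))}

theorem facetLevel_card : facetLevel n ω.card = ω.card * (2 * n + 3 - ω.card) / 2 :=
  facetLevel_eq (by simpa using card_le_univ ω)

theorem card_lt_of_ne_univ (hωu : ω ≠ univ) : ω.card < n + 1 := by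
  simpa using (card_lt_iff_ne_univ ω).2 hωu

theorem inner_facetNormal (x : EuclideanSpace ℝ (Fin (n + 1))) :
    inner ℝ (facetNormal n ω) x = ∑ i ∈ ω, x i - ω.card / (n + 1) * ∑ i, x i := by
  have hcoord (i : Fin (n + 1)) : inner ℝ (facetNormal n ω i) (x i) =
      (if i ∈ ω then x i else 0) - ω.card / (n + 1) * x i := by
    simp only [facetNormal, PiLp.toLp_apply, RCLike.inner_apply', conj_trivial]
    split_ifs <;> ring
  rw [PiLp.inner_apply, sum_congr rfl fun i _ => hcoord i, sum_sub_distrib, sum_ite_mem, univ_inter,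
    mul_sum]

theorem sum_univ_facetNormal : ∑ i, facetNormal n ω i = 0 := by
  simp only [facetNormal, sum_sub_distrib, sum_ite_mem, univ_inter, sum_const, nsmul_eq_mul,
    mul_one, card_univ, Fintype.card_fin, Nat.cast_add, Nat.cast_one]
  field_simp
  ring

theorem sum_facetNormal :
    ∑ i ∈ ω, facetNormal n ω i = ω.card * (n + 1 - ω.card) / (n + 1) := by
  simp only [facetNormal, sum_sub_distrib, sum_ite_mem, inter_self, sum_const, nsmul_eq_mul,
    mul_one]
  field_simp

theorem norm_facetNormal_sq :
    ‖facetNormal n ω‖ ^ 2 = ω.card * (n + 1 - ω.card) / (n + 1) := by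
  rw [← real_inner_self_eq_norm_sq, inner_facetNormal, sum_univ_facetNormal, sum_facetNormal,
    mul_zero, sub_zero]

theorem inner_facetNormal_sub_permCentre {x : EuclideanSpace ℝ (Fin (n + 1))}
    (hx : x ∈ facetPlane n ω) :
    inner ℝ (facetNormal n ω) (x - permCentre n) = ω.card * (n + 1 - ω.card) / 2 := by
  obtain ⟨hω, huniv⟩ := hx
  simp only [inner_facetNormal, PiLp.sub_apply, sum_sub_distrib, hω, huniv, sum_permCentre,
    facetLevel_card, card_univ, Fintype.card_fin]
  push_cast
  field_simp
  ring

theorem permCentre_add_smul_facetNormal_mem :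
    permCentre n + ((n + 1 : ℝ) / 2) • facetNormal n ω ∈ facetPlane n ω := by
  refine ⟨?_, ?_⟩ <;>
  simp only [PiLp.add_apply, PiLp.smul_apply, smul_eq_mul, sum_add_distrib, ← mul_sum,
    sum_permCentre, sum_facetNormal, sum_univ_facetNormal, facetLevel_card, card_univ, Fintype.card_fin]
  · field_simp
    ring
  · push_cast
    ring

theorem infDist_permCentre_facetPlane (hω : ω.Nonempty) (hωu : ω ≠ univ) :
    Metric.infDist (permCentre n) (facetPlane n ω) =
      √((n + 1) * (ω.card * (n + 1 - ω.card))) / 2 := by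
  set Q : ℝ := ω.card * (n + 1 - ω.card)
  have hQ : 0 < Q :=
    mul_pos (by exact_mod_cast hω.card_pos) (sub_pos.2 (by exact_mod_cast card_lt_of_ne_univ hωu))
  have hQn : 0 < Q / (n + 1) := div_pos hQ (by positivity)
  have hnorm : ‖facetNormal n ω‖ = √(Q / (n + 1)) := by
    rw [← norm_facetNormal_sq, Real.sqrt_sq (norm_nonneg _)]
  have hv : facetNormal n ω ≠ 0 := by
    rw [← norm_pos_iff, hnorm]
    exact Real.sqrt_pos.2 hQn
  have hmem :
      permCentre n + (Q / 2 / ‖facetNormal n ω‖ ^ 2) • facetNormal n ω ∈ facetPlane n ω := by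
    convert permCentre_add_smul_facetNormal_mem using 3
    rw [norm_facetNormal_sq]
    change Q / 2 / (Q / (n + 1)) = _
    field_simp
  rw [infDist_eq_of_inner_sub_eq hv (fun x hx => inner_facetNormal_sub_permCentre hx) hmem,
    abs_of_pos (half_pos hQ), hnorm,
    div_eq_div_iff (Real.sqrt_pos.2 hQn).ne' two_ne_zero,
    ← Real.sqrt_mul (mul_pos (by positivity) hQ).le,
    show (n + 1) * Q * (Q / (n + 1)) = Q ^ 2 by field_simp, Real.sqrt_sq hQ.le]
  ring

theorem permutahedron_facet_distance_general (n : ℕ)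
    (ω : Finset (Fin (n + 1))) (hω : ω.Nonempty) (hωprop : ω ≠ Finset.univ) :
    (1 / 2) * Real.sqrt ((n : ℝ) * ((n : ℝ) + 1)) ≤
      Metric.infDist (permCentre n) (facetPlane n ω) ∧
    ((ω.card = 1 ∨ ω.card = n) →
      Metric.infDist (permCentre n) (facetPlane n ω) =
        (1 / 2) * Real.sqrt ((n : ℝ) * ((n : ℝ) + 1))) := by
  have hk₁ : (1 : ℝ) ≤ ω.card := by exact_mod_cast hω.card_pos
  have hkn : (ω.card : ℝ) ≤ n := by
    exact_mod_cast Nat.lt_add_one_iff.1 (card_lt_of_ne_univ hωprop)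
  rw [infDist_permCentre_facetPlane hω hωprop]
  refine ⟨?_, ?_⟩
  · rw [one_div_mul_eq_div]
    gcongr √?_ / 2
    have := mul_nonneg (by positivity : (0 : ℝ) ≤ n + 1)
      (mul_nonneg (sub_nonneg.2 hk₁) (sub_nonneg.2 hkn))
    linarith
  · rintro (h | h) <;> rw [h] <;> push_cast <;> ring_nf

/-- For every non-empty proper subset `ω ⊂ {1, …, n+1}`, the Euclidean distance from the
centre `o` of `Πⁿ` to the affine plane spanned by the facet `F_ω` is at least
`r_n = (1/2)√(n(n+1))`, with equality when `|ω| ∈ {1, n}`. -/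
theorem permutahedron_facet_distance (n : ℕ) (hn : 1 ≤ n)
    (ω : Finset (Fin (n + 1))) (hω : ω.Nonempty) (hωprop : ω ≠ Finset.univ) :
    (1 / 2) * Real.sqrt ((n : ℝ) * ((n : ℝ) + 1)) ≤
      Metric.infDist (permCentre n) (facetPlane n ω) ∧
    ((ω.card = 1 ∨ ω.card = n) →
      Metric.infDist (permCentre n) (facetPlane n ω) =
        (1 / 2) * Real.sqrt ((n : ℝ) * ((n : ℝ) + 1))) :=
  permutahedron_facet_distance_general n ω hω hωprop
end

section
/- Let 0 < ε ≤ π/2 and let ξ₁,…,ξ_k be unit vectors in ℝⁿ with pairwise spherical (angular) distance less than ε. Then any two points of the spherical convex hull of {ξ₁,…,ξ_k} (the set of normalized nonnegative linear combinations) are at angular distance less than ε from each other. -/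
open scoped BigOperators
open InnerProductGeometry Real
open scoped RealInnerProductSpace

/-- Let `0 < ε ≤ π/2` and let `ξ₁, …, ξ_k` be unit vectors in `ℝⁿ` with pairwise angular
distance less than `ε`. Then any two points of the spherical convex hull of
`{ξ₁, …, ξ_k}` (normalized nonnegative combinations `∑ β_i ξ_i`, `β_i ≥ 0`, `∑ β_i = 1`;
the angle is unchanged by normalization) are at angular distance less than `ε`. -/
theorem spherical_hull_diameter (n k : ℕ) (ε : ℝ) (hε0 : 0 < ε) (hε : ε ≤ π / 2)
    (ξ : Fin k → EuclideanSpace ℝ (Fin n)) (hunit : ∀ i, ‖ξ i‖ = 1)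
    (hpair : ∀ i j, i ≠ j → angle (ξ i) (ξ j) < ε)
    (β γ : Fin k → ℝ) (hβ : ∀ i, 0 ≤ β i) (hγ : ∀ i, 0 ≤ γ i)
    (hβs : ∑ i, β i = 1) (hγs : ∑ i, γ i = 1) :
    angle (∑ i, β i • ξ i) (∑ i, γ i • ξ i) < ε := by
  set u := ∑ i, β i • ξ i with hu
  set v := ∑ i, γ i • ξ i with hv
  have hεπ : ε ≤ π := hε.trans (by linarith [Real.pi_pos])
  have hcos_nonneg : 0 ≤ Real.cos ε :=
    Real.cos_nonneg_of_mem_Icc ⟨by linarith [Real.pi_pos], hε⟩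
  -- each pairwise inner product strictly exceeds `cos ε`
  have hcoslt : ∀ i j, Real.cos ε < ⟪ξ i, ξ j⟫ := by
    intro i j
    by_cases h : i = j
    · subst h
      have : ⟪ξ i, ξ i⟫ = 1 := by
        rw [real_inner_self_eq_norm_sq, hunit i]; norm_num
      rw [this]
      have := Real.cos_lt_cos_of_nonneg_of_le_pi le_rfl hεπ hε0
      simpa using this
    · have hlt : Real.cos ε < Real.cos (angle (ξ i) (ξ j)) :=
        Real.cos_lt_cos_of_nonneg_of_le_pi (angle_nonneg _ _) hεπ (hpair i j h)
      have hcos := InnerProductGeometry.cos_angle (ξ i) (ξ j)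
      rw [hunit, hunit] at hcos
      simp only [mul_one, div_one] at hcos
      rwa [hcos] at hlt
  -- expand the inner product of the combinations
  have hinner : ⟪u, v⟫ = ∑ i, ∑ j, β i * γ j * ⟪ξ i, ξ j⟫ := by
    rw [hu, hv, sum_inner]
    refine Finset.sum_congr rfl fun i _ => ?_
    rw [inner_sum]
    refine Finset.sum_congr rfl fun j _ => ?_
    rw [real_inner_smul_left, real_inner_smul_right]; ring
  -- strict lower bound on the inner product
  have hβpos : ∃ i, 0 < β i := by
    by_contra h
    push_neg at h
    have : ∑ i, β i = 0 := Finset.sum_eq_zero fun i _ => le_antisymm (h i) (hβ i)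
    rw [hβs] at this; norm_num at this
  have hγpos : ∃ j, 0 < γ j := by
    by_contra h
    push_neg at h
    have : ∑ j, γ j = 0 := Finset.sum_eq_zero fun j _ => le_antisymm (h j) (hγ j)
    rw [hγs] at this; norm_num at this
  obtain ⟨i₀, hi₀⟩ := hβpos
  obtain ⟨j₀, hj₀⟩ := hγpos
  have hcc : Real.cos ε = ∑ i, ∑ j, β i * γ j * Real.cos ε := by
    have : ∀ i, ∑ j, β i * γ j * Real.cos ε = β i * Real.cos ε := by
      intro i
      rw [← Finset.sum_mul, ← Finset.mul_sum, hγs, mul_one]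
    simp only [this, ← Finset.sum_mul, hβs, one_mul]
  have hlt : Real.cos ε < ⟪u, v⟫ := by
    rw [hinner, hcc]
    refine Finset.sum_lt_sum (fun i _ => ?_) ⟨i₀, Finset.mem_univ _, ?_⟩
    · refine Finset.sum_le_sum fun j _ => ?_
      exact mul_le_mul_of_nonneg_left (hcoslt i j).le (mul_nonneg (hβ i) (hγ j))
    · refine Finset.sum_lt_sum (fun j _ => ?_) ⟨j₀, Finset.mem_univ _, ?_⟩
      · exact mul_le_mul_of_nonneg_left (hcoslt i₀ j).le (mul_nonneg (hβ i₀) (hγ j))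
      · exact mul_lt_mul_of_pos_left (hcoslt i₀ j₀) (mul_pos hi₀ hj₀)
  have hip : 0 < ⟪u, v⟫ := lt_of_le_of_lt hcos_nonneg hlt
  have hu0 : u ≠ 0 := by
    intro h; rw [h, inner_zero_left] at hip; exact lt_irrefl _ hip
  have hv0 : v ≠ 0 := by
    intro h; rw [h, inner_zero_right] at hip; exact lt_irrefl _ hip
  have hnu : ‖u‖ ≤ 1 := by
    calc ‖u‖ ≤ ∑ i, ‖β i • ξ i‖ := norm_sum_le _ _
    _ = ∑ i, β i := by
        refine Finset.sum_congr rfl fun i _ => ?_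
        rw [norm_smul, hunit i, mul_one, Real.norm_eq_abs, abs_of_nonneg (hβ i)]
    _ = 1 := hβs
  have hnv : ‖v‖ ≤ 1 := by
    calc ‖v‖ ≤ ∑ i, ‖γ i • ξ i‖ := norm_sum_le _ _
    _ = ∑ i, γ i := by
        refine Finset.sum_congr rfl fun i _ => ?_
        rw [norm_smul, hunit i, mul_one, Real.norm_eq_abs, abs_of_nonneg (hγ i)]
    _ = 1 := hγs
  have hnup : 0 < ‖u‖ := norm_pos_iff.mpr hu0
  have hnvp : 0 < ‖v‖ := norm_pos_iff.mpr hv0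
  have hdpos : 0 < ‖u‖ * ‖v‖ := mul_pos hnup hnvp
  have hd1 : ‖u‖ * ‖v‖ ≤ 1 := by
    calc ‖u‖ * ‖v‖ ≤ 1 * 1 := mul_le_mul hnu hnv hnvp.le (by norm_num)
    _ = 1 := by norm_num
  have hratio : Real.cos ε < ⟪u, v⟫ / (‖u‖ * ‖v‖) := by
    refine lt_of_lt_of_le hlt ?_
    rw [le_div_iff₀ hdpos]
    calc ⟪u, v⟫ * (‖u‖ * ‖v‖) ≤ ⟪u, v⟫ * 1 :=
          mul_le_mul_of_nonneg_left hd1 hip.le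
    _ = ⟪u, v⟫ := mul_one _
  have hratio_le : ⟪u, v⟫ / (‖u‖ * ‖v‖) ≤ 1 :=
    (abs_le.mp (abs_real_inner_div_norm_mul_norm_le_one u v)).2
  have hkey : Real.arccos (⟪u, v⟫ / (‖u‖ * ‖v‖)) < Real.arccos (Real.cos ε) :=
    Real.strictAntiOn_arccos ⟨Real.neg_one_le_cos ε, Real.cos_le_one ε⟩
      ⟨by linarith [Real.neg_one_le_cos ε], hratio_le⟩ hratio
  rw [Real.arccos_cos hε0.le hεπ] at hkey
  rwa [InnerProductGeometry.angle]
end
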